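/- arXiv:2305.09818 — 3 statements merged into one kernel-verified Lean document; each statement's English description precedes it below -/
import Mathlib

section
/- Let G be a group with a balanced presentation G = ⟨a_1,…,a_n ∣ R_1^{m_1} = ⋯ = R_n^{m_n} = 1⟩, where each R_i is a non-trivial cyclically reduced word in the free group on a_1,…,a_n and each m_i ≥ 1. If at least one m_j ≥ 2, then G is non-trivial. -/
open scoped MatrixGroups

namespace FPaper

/-- A (reduced) word in a free group is *cyclically reduced* if its first letter is not the
formal inverse of its last letter. -/
def CyclicallyReduced {α : Type*} [DecidableEq α] (w : FreeGroup α) : Prop :=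
  ∀ x y : α × Bool, w.toWord.head? = some x → w.toWord.getLast? = some y →
    x.1 = y.1 → x.2 = y.2

/-- The combinatorial data of a presentation of F-type:
`⟨a_1, …, a_n ∣ a_1^{e_1} = ⋯ = a_n^{e_n} = U V = 1⟩` with
`U = U(a_1, …, a_p)` and `V = V(a_{p+1}, …, a_n)`. -/
structure FTypeBase where
  n : ℕ
  e : Fin n → ℕ
  p : ℕ
  U : FreeGroup (Fin n)
  V : FreeGroup (Fin n)

namespace FTypeBase

/-- Relators of the full F-type presentation. -/
def rels (D : FTypeBase) : Set (FreeGroup (Fin D.n)) :=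
  {w | ∃ i : Fin D.n, w = FreeGroup.of i ^ D.e i} ∪ {D.U * D.V}

/-- Relators presenting the first factor `G₁` (the generators `a_{p+1}, …, a_n` are killed), so
that `PresentedGroup D.rels1` is the free product of cyclics on `a_1, …, a_p`. -/
def rels1 (D : FTypeBase) : Set (FreeGroup (Fin D.n)) :=
  {w | ∃ i : Fin D.n, (i : ℕ) < D.p ∧ w = FreeGroup.of i ^ D.e i} ∪
    {w | ∃ i : Fin D.n, D.p ≤ (i : ℕ) ∧ w = FreeGroup.of i}

/-- Relators presenting the second factor `G₂` (the generators `a_1, …, a_p` are killed), so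
that `PresentedGroup D.rels2` is the free product of cyclics on `a_{p+1}, …, a_n`. -/
def rels2 (D : FTypeBase) : Set (FreeGroup (Fin D.n)) :=
  {w | ∃ i : Fin D.n, D.p ≤ (i : ℕ) ∧ w = FreeGroup.of i ^ D.e i} ∪
    {w | ∃ i : Fin D.n, (i : ℕ) < D.p ∧ w = FreeGroup.of i}

/-- The group presented by the F-type presentation. -/
abbrev Gp (D : FTypeBase) := PresentedGroup D.rels

/-- The first factor `G₁ = ⟨a_1, …, a_p ∣ a_1^{e_1} = ⋯ = a_p^{e_p} = 1⟩`. -/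
abbrev Gp1 (D : FTypeBase) := PresentedGroup D.rels1

/-- The second factor `G₂ = ⟨a_{p+1}, …, a_n ∣ a_{p+1}^{e_{p+1}} = ⋯ = a_n^{e_n} = 1⟩`. -/
abbrev Gp2 (D : FTypeBase) := PresentedGroup D.rels2

/-- The image of the word `U` in the first factor `G₁`. -/
def imgU1 (D : FTypeBase) : D.Gp1 := PresentedGroup.mk D.rels1 D.U

/-- The image of the word `V` in the second factor `G₂`. -/
def imgV2 (D : FTypeBase) : D.Gp2 := PresentedGroup.mk D.rels2 D.V

/-- The conditions making an F-type presentation: `n ≥ 2`; each `e_i` is `0` or `≥ 2`;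
`1 ≤ p ≤ n - 1`; `U` is a cyclically reduced word in `a_1, …, a_p` of infinite order in `G₁`;
`V` is a cyclically reduced word in `a_{p+1}, …, a_n` of infinite order in `G₂`; and if
`p = 1` (resp. `p = n - 1`) then `U = a_1^m` (resp. `V = a_n^m`) for some `m ≥ 2`. -/
def IsFType (D : FTypeBase) : Prop :=
  2 ≤ D.n ∧ (∀ i, D.e i = 0 ∨ 2 ≤ D.e i) ∧ 1 ≤ D.p ∧ D.p ≤ D.n - 1 ∧
  (∀ x ∈ D.U.toWord, (x.1 : ℕ) < D.p) ∧ (∀ x ∈ D.V.toWord, D.p ≤ (x.1 : ℕ)) ∧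
  CyclicallyReduced D.U ∧ CyclicallyReduced D.V ∧
  ¬ IsOfFinOrder D.imgU1 ∧ ¬ IsOfFinOrder D.imgV2 ∧
  (D.p = 1 → ∃ (i : Fin D.n) (m : ℕ), (i : ℕ) = 0 ∧ 2 ≤ m ∧ D.U = FreeGroup.of i ^ m) ∧
  (D.p = D.n - 1 → ∃ (i : Fin D.n) (m : ℕ), (i : ℕ) = D.n - 1 ∧ 2 ≤ m ∧ D.V = FreeGroup.of i ^ m)

/-- The subgroup of the F-type group generated by (the images of) `a_1, …, a_p`. -/
def factor1 (D : FTypeBase) : Subgroup D.Gp :=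
  Subgroup.closure {g | ∃ i : Fin D.n, (i : ℕ) < D.p ∧ g = PresentedGroup.of i}

/-- The subgroup of the F-type group generated by (the images of) `a_{p+1}, …, a_n`. -/
def factor2 (D : FTypeBase) : Subgroup D.Gp :=
  Subgroup.closure {g | ∃ i : Fin D.n, D.p ≤ (i : ℕ) ∧ g = PresentedGroup.of i}

/-- The amalgamated subgroup `A = ⟨U⟩ = ⟨V⟩` of the F-type group. -/
def amalg (D : FTypeBase) : Subgroup D.Gp :=
  Subgroup.zpowers (PresentedGroup.mk D.rels D.U)

end FTypeBase

/-- A group is *of F-type* if it is isomorphic to the group of some F-type presentation. -/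
def IsFTypeGroup (G : Type*) [Group G] : Prop :=
  ∃ D : FTypeBase, D.IsFType ∧ Nonempty (G ≃* D.Gp)

/-- An element of a group is a *proper power* if it equals `h ^ k` for some `k ≥ 2`. -/
def IsProperPower {G : Type*} [Group G] (g : G) : Prop :=
  ∃ (h : G) (k : ℕ), 2 ≤ k ∧ g = h ^ k

/-- A group is a *free product of cyclic groups* if it has a presentation in which every
relator is a power of a generator. -/
def IsFreeProductOfCyclics (H : Type*) [Group H] : Prop :=
  ∃ (ι : Type) (e : ι → ℕ),
    Nonempty (H ≃* PresentedGroup {w : FreeGroup ι | ∃ i : ι, w = FreeGroup.of i ^ e i})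

/-- A subgroup `K` of `H` is *malnormal* if `g K g⁻¹ ∩ K = {1}` for every `g ∉ K`. -/
def IsMalnormal {H : Type*} [Group H] (K : Subgroup H) : Prop :=
  ∀ g : H, g ∉ K → ∀ x ∈ K, g * x * g⁻¹ ∈ K → x = 1

end FPaper

namespace FPaper

/-- A group with a balanced presentation
`⟨a_1, …, a_n ∣ R_1^{m_1} = ⋯ = R_n^{m_n} = 1⟩`, where each `R_i` is a non-trivial cyclically
reduced word and each `m_i ≥ 1`, is non-trivial provided at least one `m_j ≥ 2`. -/
theorem balanced_presentation_nontrivial (n : ℕ) (R : Fin n → FreeGroup (Fin n))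
    (hRne : ∀ i, R i ≠ 1) (hRred : ∀ i, CyclicallyReduced (R i))
    (m : Fin n → ℕ) (hm : ∀ i, 1 ≤ m i) (j : Fin n) (hj : 2 ≤ m j) :
    Nontrivial (PresentedGroup {w : FreeGroup (Fin n) | ∃ i : Fin n, w = R i ^ m i}) := by
  set rels : Set (FreeGroup (Fin n)) := {w | ∃ i, w = R i ^ m i} with hrels
  by_contra hnt
  rw [not_nontrivial_iff_subsingleton] at hnt
  have hN : ∀ g : FreeGroup (Fin n), g ∈ Subgroup.normalClosure rels := by
    intro g
    exact (QuotientGroup.eq_one_iff g).mp (hnt.elim _ _)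
  set φ : FreeGroup (Fin n) →* Multiplicative (Fin n → ℤ) :=
    FreeGroup.lift fun i => Multiplicative.ofAdd (Pi.single i (1:ℤ)) with hφ
  set u : Fin n → Fin n → ℤ := fun i => Multiplicative.toAdd (φ (R i)) with hu
  set v : Fin n → Fin n → ℤ := fun i => (m i : ℤ) • u i with hv
  have hRim : ∀ i, φ (R i ^ m i) = Multiplicative.ofAdd (v i) := by
    intro i
    rw [map_pow]
    apply Multiplicative.toAdd.injective
    simp [hv, hu, toAdd_pow, natCast_zsmul]
  have hspan : ∀ k, Pi.single k (1:ℤ) ∈ Submodule.span ℤ (Set.range v) := by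
    intro k
    set K : Subgroup (Multiplicative (Fin n → ℤ)) :=
      AddSubgroup.toSubgroup (Submodule.span ℤ (Set.range v)).toAddSubgroup with hK
    have hrelsK : rels ⊆ (K.comap φ : Set (FreeGroup (Fin n))) := by
      rintro w ⟨i, rfl⟩
      have hvi : v i ∈ Submodule.span ℤ (Set.range v) := Submodule.subset_span ⟨i, rfl⟩
      have : φ (R i ^ m i) ∈ K := by rw [hRim i]; exact hvi
      exact this
    have hle : Subgroup.normalClosure rels ≤ K.comap φ :=
      Subgroup.normalClosure_le_normal hrelsK
    have hk := hle (hN (FreeGroup.of k))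
    have : φ (FreeGroup.of k) = Multiplicative.ofAdd (Pi.single k (1:ℤ)) := by
      simp [hφ]
    rw [Subgroup.mem_comap, this] at hk
    exact hk
  have htop : Submodule.span ℤ (Set.range v) = ⊤ := by
    rw [eq_top_iff]
    intro x _
    have hx : x = ∑ k, x k • Pi.single k (1:ℤ) := by
      ext l
      simp [Pi.single_apply, Finset.sum_apply, mul_ite]
    rw [hx]
    exact Submodule.sum_mem _ fun k _ => Submodule.smul_mem _ _ (hspan k)
  set M : Matrix (Fin n) (Fin n) ℤ := Matrix.of v with hM
  have hsurj : Function.Surjective M.vecMulLinear := by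
    rw [← LinearMap.range_eq_top, range_vecMulLinear]
    exact htop
  have hinj := OrzechProperty.injective_of_surjective_endomorphism M.vecMulLinear hsurj
  have hunit : IsUnit M.vecMulLinear := (Module.End.isUnit_iff _).mpr ⟨hinj, hsurj⟩
  have hdet : IsUnit (LinearMap.det M.vecMulLinear) := hunit.map LinearMap.det
  have hVL : M.vecMulLinear = Matrix.toLin' M.transpose := by
    ext x i
    simp [Matrix.vecMulLinear, Matrix.mulVec_transpose, Matrix.toLin'_apply]
  rw [hVL, LinearMap.det_toLin', Matrix.det_transpose] at hdet
  have hdd : M.det = (∏ i, (m i : ℤ)) * (Matrix.of u).det := by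
    rw [← Matrix.det_mul_column]
    congr 1
  rw [hdd] at hdet
  have h2 : IsUnit (∏ i, (m i : ℤ)) := isUnit_of_mul_isUnit_left hdet
  have h3 : IsUnit ((m j : ℤ)) :=
    isUnit_of_dvd_unit (Finset.dvd_prod_of_mem (fun i => (m i : ℤ)) (Finset.mem_univ j)) h2
  rcases Int.isUnit_iff.mp h3 with h | h <;> omega


end FPaper
end

section
/- Let G be a group of F-type in which U = U_1^α with α ≥ 2 is a proper power in G_1 and V = V_1^β with β ≥ 2 is a proper power in G_2. Then G admits no faithful representation into PSL(2,ℂ). -/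
open scoped MatrixGroups

namespace FPaperAux

lemma matrix_pair_aux (M X : Matrix (Fin 2) (Fin 2) ℂ)
    (hns : ¬(M 0 1 = 0 ∧ M 1 0 = 0 ∧ M 0 0 = M 1 1))
    (hX : M * X = X * M) :
    ∃ s t : ℂ, X = s • (1 : Matrix (Fin 2) (Fin 2) ℂ) + t • M := by
  have e : ∀ i j, (M * X) i j = (X * M) i j := fun i j => by rw [hX]
  have e00 := e 0 0
  have e01 := e 0 1
  have e10 := e 1 0
  simp only [Matrix.mul_apply, Fin.sum_univ_two] at e00 e01 e10
  by_cases ha : M 0 1 = 0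
  · by_cases hb : M 1 0 = 0
    · have hd : M 0 0 - M 1 1 ≠ 0 := sub_ne_zero.2 (by tauto)
      have hx01 : X 0 1 = 0 := by
        rcases mul_eq_zero.1 (show (M 0 0 - M 1 1) * X 0 1 = 0 by
          linear_combination e01 - X 1 1 * ha + X 0 0 * ha) with h | h
        · exact absurd h hd
        · exact h
      have hx10 : X 1 0 = 0 := by
        rcases mul_eq_zero.1 (show (M 0 0 - M 1 1) * X 1 0 = 0 by
          linear_combination -e10 + X 0 0 * hb - X 1 1 * hb) with h | h
        · exact absurd h hd
        · exact h
      refine ⟨X 1 1 - (X 0 0 - X 1 1) / (M 0 0 - M 1 1) * M 1 1,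
        (X 0 0 - X 1 1) / (M 0 0 - M 1 1), ?_⟩
      ext i j
      fin_cases i <;> fin_cases j
      · show X 0 0 = _
        simp [Matrix.one_apply]
        field_simp
        ring
      · show X 0 1 = _
        simp [Matrix.one_apply, hx01, ha]
      · show X 1 0 = _
        simp [Matrix.one_apply, hx10, hb]
      · show X 1 1 = _
        simp [Matrix.one_apply]
    · have hx01 : X 0 1 = 0 := by
        rcases mul_eq_zero.1 (show M 1 0 * X 0 1 = 0 by
          linear_combination -e00 + X 1 0 * ha) with h | h
        · exact absurd h hb
        · exact h
      refine ⟨X 1 1 - X 1 0 / M 1 0 * M 1 1, X 1 0 / M 1 0, ?_⟩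
      ext i j
      fin_cases i <;> fin_cases j
      · show X 0 0 = _
        simp [Matrix.one_apply]
        field_simp
        linear_combination e10
      · show X 0 1 = _
        simp [Matrix.one_apply, hx01, ha]
      · show X 1 0 = _
        simp [Matrix.one_apply]
        field_simp
      · show X 1 1 = _
        simp [Matrix.one_apply]
  · refine ⟨X 1 1 - X 0 1 / M 0 1 * M 1 1, X 0 1 / M 0 1, ?_⟩
    ext i j
    fin_cases i <;> fin_cases j
    · show X 0 0 = _
      simp [Matrix.one_apply]
      field_simp
      linear_combination -e01
    · show X 0 1 = _
      simp [Matrix.one_apply]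
      field_simp
    · show X 1 0 = _
      simp [Matrix.one_apply]
      field_simp
      linear_combination e00
    · show X 1 1 = _
      simp [Matrix.one_apply]

lemma commute_of_pair {M X Y : Matrix (Fin 2) (Fin 2) ℂ}
    (hns : ¬(M 0 1 = 0 ∧ M 1 0 = 0 ∧ M 0 0 = M 1 1))
    (hX : M * X = X * M) (hY : M * Y = Y * M) : X * Y = Y * X := by
  obtain ⟨s, t, rfl⟩ := matrix_pair_aux M X hns hX
  obtain ⟨s', t', rfl⟩ := matrix_pair_aux M Y hns hY
  simp only [add_mul, mul_add, Matrix.smul_mul, Matrix.mul_smul, smul_smul,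
    one_mul, mul_one]
  rw [mul_comm s s', mul_comm s t', mul_comm t s', mul_comm t t']
  abel

lemma negdiag : Matrix.diagonal (fun _ : Fin 2 => (-1 : ℂ)) = -(1 : Matrix (Fin 2) (Fin 2) ℂ) := by
  ext i j
  rw [Matrix.diagonal_apply]
  by_cases h : i = j <;> simp [h, Matrix.one_apply]

abbrev SL2 := Matrix.SpecialLinearGroup (Fin 2) ℂ

lemma sign_of_comm {M A : SL2}
    (h : (QuotientGroup.mk M : PSL(2, ℂ)) * QuotientGroup.mk A
      = QuotientGroup.mk A * QuotientGroup.mk M) :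
    (A : Matrix (Fin 2) (Fin 2) ℂ) * M = M * A ∨
      (A : Matrix (Fin 2) (Fin 2) ℂ) * M = -(M * A) := by
  have h' : (QuotientGroup.mk (M * A) : PSL(2, ℂ)) = QuotientGroup.mk (A * M) := by
    simpa using h
  have hz : (M * A)⁻¹ * (A * M) ∈ Subgroup.center SL2 := (QuotientGroup.eq).1 h'
  obtain ⟨r, hr, hscalar⟩ := (Matrix.SpecialLinearGroup.mem_center_iff).1 hz
  have hr2 : r ^ 2 = 1 := by simpa using hr
  have hMA : (A : Matrix (Fin 2) (Fin 2) ℂ) * M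
      = (M * A : Matrix (Fin 2) (Fin 2) ℂ) * (Matrix.scalar (Fin 2) r) := by
    have key : ((M * A : SL2) : Matrix (Fin 2) (Fin 2) ℂ)
        * (((M * A)⁻¹ * (A * M) : SL2) : Matrix (Fin 2) (Fin 2) ℂ)
        = ((A * M : SL2) : Matrix (Fin 2) (Fin 2) ℂ) := by
      rw [← Matrix.SpecialLinearGroup.coe_mul]
      rw [mul_inv_cancel_left]
    rw [← hscalar, Matrix.SpecialLinearGroup.coe_mul, Matrix.SpecialLinearGroup.coe_mul] at key
    rw [← key]
  have hr1 : r = 1 ∨ r = -1 := by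
    have : (r - 1) * (r + 1) = 0 := by linear_combination hr2
    rcases mul_eq_zero.1 this with h | h
    · exact Or.inl (by linear_combination h)
    · exact Or.inr (by linear_combination h)
  rcases hr1 with rfl | rfl
  · left
    simpa using hMA
  · right
    rw [hMA, Matrix.scalar_apply]
    rw [negdiag, mul_neg_one]

lemma psl_order_two {M A : SL2}
    (hanti : (A : Matrix (Fin 2) (Fin 2) ℂ) * M = -(M * A : Matrix (Fin 2) (Fin 2) ℂ)) :
    (QuotientGroup.mk M : PSL(2, ℂ)) ^ 2 = 1 := by
  set Mm := (M : Matrix (Fin 2) (Fin 2) ℂ)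
  set Am := (A : Matrix (Fin 2) (Fin 2) ℂ)
  have hAi : Am * ((A⁻¹ : SL2) : Matrix (Fin 2) (Fin 2) ℂ) = 1 := by
    rw [← Matrix.SpecialLinearGroup.coe_mul, mul_inv_cancel,
      Matrix.SpecialLinearGroup.coe_one]
  have hAi' : ((A⁻¹ : SL2) : Matrix (Fin 2) (Fin 2) ℂ) * Am = 1 := by
    rw [← Matrix.SpecialLinearGroup.coe_mul, inv_mul_cancel,
      Matrix.SpecialLinearGroup.coe_one]
  have htr : Matrix.trace Mm = - Matrix.trace Mm := by
    conv_lhs => rw [show Mm = ((A⁻¹ : SL2) : Matrix (Fin 2) (Fin 2) ℂ) * (Am * Mm) by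
      rw [← mul_assoc, hAi', one_mul]]
    rw [Matrix.trace_mul_comm, hanti, neg_mul, Matrix.trace_neg, mul_assoc, hAi, mul_one]
  have h0 : Mm 0 0 + Mm 1 1 = 0 := by
    have h2 : (2 : ℂ) * Matrix.trace Mm = 0 := by linear_combination htr
    rcases mul_eq_zero.1 h2 with h | h
    · norm_num at h
    · rw [Matrix.trace_fin_two] at h
      exact h
  have hdet : Mm 0 0 * Mm 1 1 - Mm 0 1 * Mm 1 0 = 1 := by
    have := M.property
    rwa [Matrix.det_fin_two] at this
  have hsq : Mm * Mm = -1 := by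
    ext i j
    fin_cases i <;> fin_cases j <;>
      simp only [Matrix.mul_apply, Fin.sum_univ_two, Matrix.neg_apply, Matrix.one_apply,
        Fin.isValue, if_true, if_false, Fin.zero_eta, Fin.mk_one, ne_eq, zero_ne_one,
        one_ne_zero, reduceIte]
    · linear_combination Mm 0 0 * h0 - hdet
    · linear_combination Mm 0 1 * h0
    · linear_combination Mm 1 0 * h0
    · linear_combination Mm 1 1 * h0 - hdet
  have hcen : (M ^ 2 : SL2) ∈ Subgroup.center SL2 := by
    refine (Matrix.SpecialLinearGroup.mem_center_iff).2 ⟨-1, by norm_num, ?_⟩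
    have : ((M ^ 2 : SL2) : Matrix (Fin 2) (Fin 2) ℂ) = Mm * Mm := by
      rw [Matrix.SpecialLinearGroup.coe_pow, sq]
    rw [this, hsq, Matrix.scalar_apply, negdiag]
  have : ((M ^ 2 : SL2) : PSL(2, ℂ)) = 1 := (QuotientGroup.eq_one_iff _).2 hcen
  rw [← QuotientGroup.mk_pow] at *
  exact this

lemma psl_squash {C X Y : PSL(2, ℂ)} (hcx : C * X = X * C) (hcy : C * Y = Y * C)
    (hxy : X * Y ≠ Y * X) : C ^ 2 = 1 := by
  obtain ⟨M, rfl⟩ := QuotientGroup.mk_surjective C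
  obtain ⟨A, rfl⟩ := QuotientGroup.mk_surjective X
  obtain ⟨B, rfl⟩ := QuotientGroup.mk_surjective Y
  rcases sign_of_comm hcx with h1 | h1
  · rcases sign_of_comm hcy with h2 | h2
    · set Mm := (M : Matrix (Fin 2) (Fin 2) ℂ) with hMm
      by_cases hns : (Mm 0 1 = 0 ∧ Mm 1 0 = 0 ∧ Mm 0 0 = Mm 1 1)
      · have hdet : Mm 0 0 * Mm 1 1 - Mm 0 1 * Mm 1 0 = 1 := by
          have := M.property
          rwa [Matrix.det_fin_two] at this
        have hcenM : M ∈ Subgroup.center SL2 := by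
          refine (Matrix.SpecialLinearGroup.mem_center_iff).2 ⟨Mm 0 0, ?_, ?_⟩
          · simp only [Fintype.card_fin]
            linear_combination hdet + Mm 0 0 * hns.2.2 + Mm 1 0 * hns.1
          · rw [Matrix.scalar_apply]
            ext i j
            rw [Matrix.diagonal_apply]
            fin_cases i <;> fin_cases j
            · simp [hMm]
            · simpa using hns.1.symm
            · simpa using hns.2.1.symm
            · simpa using hns.2.2
        have h1 : (QuotientGroup.mk M : PSL(2, ℂ)) = 1 := (QuotientGroup.eq_one_iff _).2 hcenM
        rw [h1, one_pow]
      · exfalso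
        have habm : (A : Matrix (Fin 2) (Fin 2) ℂ) * B = (B : Matrix (Fin 2) (Fin 2) ℂ) * A :=
          commute_of_pair hns h1.symm h2.symm
        have : A * B = B * A := Subtype.ext (by
          rw [Matrix.SpecialLinearGroup.coe_mul, Matrix.SpecialLinearGroup.coe_mul]
          exact habm)
        exact hxy (by rw [← QuotientGroup.mk_mul, this, QuotientGroup.mk_mul])
    · exact psl_order_two h2
  · exact psl_order_two h1


end FPaperAux

namespace FPaperAux2

open Monoid

lemma zph {G : Type*} [Group G] (x : G) :
    zpowersHom G x (Multiplicative.ofAdd 1) = x := zpow_one x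

lemma pres_mk_rel {α : Type*} {rels : Set (FreeGroup α)} {r : FreeGroup α} (h : r ∈ rels) :
    PresentedGroup.mk rels r = 1 :=
  (QuotientGroup.eq_one_iff r).2 (Subgroup.subset_normalClosure h)

lemma hom_eq_of_letters {ι K : Type*} [DecidableEq ι] [Group K] {g h : FreeGroup ι →* K}
    {S : ι → Prop} (hgen : ∀ i, S i → g (FreeGroup.of i) = h (FreeGroup.of i))
    {w : FreeGroup ι} (hw : ∀ x ∈ w.toWord, S x.1) : g w = h w := by
  suffices h' : ∀ L : List (ι × Bool), (∀ x ∈ L, S x.1) →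
      g (FreeGroup.mk L) = h (FreeGroup.mk L) by
    rw [← FreeGroup.mk_toWord (x := w)]
    exact h' _ hw
  intro L
  induction L with
  | nil => intro _; simp [show FreeGroup.mk ([] : List (ι × Bool)) = 1 from rfl]
  | cons x L ih =>
    intro hS
    have hsplit : FreeGroup.mk (x :: L) = FreeGroup.mk [x] * FreeGroup.mk L := by
      rw [FreeGroup.mul_mk, List.singleton_append]
    have hone : g (FreeGroup.mk [x]) = h (FreeGroup.mk [x]) := by
      have hs : S x.1 := hS x List.mem_cons_self
      rcases x with ⟨i, b⟩
      cases b
      · have hmk : FreeGroup.mk [(i, false)] = (FreeGroup.of i)⁻¹ := by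
          rw [show (FreeGroup.of i : FreeGroup ι) = FreeGroup.mk [(i, true)] from rfl,
            FreeGroup.inv_mk]
          rfl
        rw [hmk, map_inv, map_inv, hgen i hs]
      · exact hgen i hs
    rw [hsplit, map_mul, map_mul, hone, ih (fun y hy => hS y (List.mem_cons_of_mem _ hy))]

open FPaper FPaper.FTypeBase

variable (D : FTypeBase)

/-- The two factors, indexed by `Bool`. -/
def Fac : Bool → Type := fun b => cond b D.Gp1 D.Gp2

instance : ∀ b, Group (Fac D b) := fun b => by
  cases b
  · exact inferInstanceAs (Group D.Gp2)
  · exact inferInstanceAs (Group D.Gp1)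

/-- The amalgamating maps from `ℤ`. -/
def phi : ∀ b, Multiplicative ℤ →* Fac D b := fun b =>
  match b with
  | true => zpowersHom D.Gp1 D.imgU1
  | false => zpowersHom D.Gp2 D.imgV2⁻¹

/-- The amalgamated free product `G₁ *_ℤ G₂`. -/
abbrev P := Monoid.PushoutI (phi D)

def of1 : D.Gp1 →* P D := PushoutI.of (φ := phi D) true

def of2 : D.Gp2 →* P D := PushoutI.of (φ := phi D) false

lemma of1_imgU1 : of1 D D.imgU1 = PushoutI.base (phi D) (Multiplicative.ofAdd 1) := by
  rw [← PushoutI.of_apply_eq_base (phi D) true (Multiplicative.ofAdd 1)]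
  have : phi D true (Multiplicative.ofAdd 1) = D.imgU1 := by
    exact zph D.imgU1
  rw [this]
  rfl

lemma of2_imgV2_inv : of2 D D.imgV2⁻¹ = PushoutI.base (phi D) (Multiplicative.ofAdd 1) := by
  rw [← PushoutI.of_apply_eq_base (phi D) false (Multiplicative.ofAdd 1)]
  have : phi D false (Multiplicative.ofAdd 1) = D.imgV2⁻¹ := by
    exact zph D.imgV2⁻¹
  rw [this]
  rfl

lemma of2_imgV2 : of2 D D.imgV2 = (of1 D D.imgU1)⁻¹ := by
  rw [of1_imgU1, ← of2_imgV2_inv, ← map_inv, inv_inv]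

variable {D}

/-- Generator images for the map `Gp → P`. -/
def thetaF : Fin D.n → P D := fun i =>
  if (i : ℕ) < D.p then of1 D (PresentedGroup.of i) else of2 D (PresentedGroup.of i)

lemma lift_thetaF_small {w : FreeGroup (Fin D.n)} (hw : ∀ x ∈ w.toWord, (x.1 : ℕ) < D.p) :
    FreeGroup.lift thetaF w = of1 D (PresentedGroup.mk D.rels1 w) :=
  hom_eq_of_letters (g := FreeGroup.lift thetaF)
    (h := (of1 D).comp (PresentedGroup.mk D.rels1)) (S := fun i => (i : ℕ) < D.p)
    (fun i hi => by simp only [FreeGroup.lift_apply_of, thetaF, if_pos hi]; rfl) hw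

lemma lift_thetaF_large {w : FreeGroup (Fin D.n)} (hw : ∀ x ∈ w.toWord, D.p ≤ (x.1 : ℕ)) :
    FreeGroup.lift thetaF w = of2 D (PresentedGroup.mk D.rels2 w) :=
  hom_eq_of_letters (g := FreeGroup.lift thetaF)
    (h := (of2 D).comp (PresentedGroup.mk D.rels2)) (S := fun i => D.p ≤ (i : ℕ))
    (fun i hi => by simp only [FreeGroup.lift_apply_of, thetaF, if_neg (Nat.not_lt.2 hi)]; rfl) hw

variable (hUl : ∀ x ∈ D.U.toWord, (x.1 : ℕ) < D.p) (hVl : ∀ x ∈ D.V.toWord, D.p ≤ (x.1 : ℕ))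

include hUl hVl in
lemma theta_rels : ∀ r ∈ D.rels, FreeGroup.lift thetaF r = 1 := by
  rintro r (⟨i, rfl⟩ | rfl)
  · by_cases hi : (i : ℕ) < D.p
    · rw [map_pow, FreeGroup.lift_apply_of, thetaF, if_pos hi,
        show (PresentedGroup.of i : D.Gp1) = PresentedGroup.mk D.rels1 (FreeGroup.of i) from rfl,
        ← map_pow, ← map_pow, pres_mk_rel (Or.inl ⟨i, hi, rfl⟩), map_one]
    · rw [map_pow, FreeGroup.lift_apply_of, thetaF, if_neg hi,
        show (PresentedGroup.of i : D.Gp2) = PresentedGroup.mk D.rels2 (FreeGroup.of i) from rfl,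
        ← map_pow, ← map_pow, pres_mk_rel (Or.inl ⟨i, by omega, rfl⟩), map_one]
  · rw [map_mul, lift_thetaF_small hUl, lift_thetaF_large hVl]
    rw [show PresentedGroup.mk D.rels1 D.U = D.imgU1 from rfl,
      show PresentedGroup.mk D.rels2 D.V = D.imgV2 from rfl]
    rw [of2_imgV2, of1_imgU1]
    simp

/-- The canonical map `Gp → P`. -/
def theta : D.Gp →* P D := PresentedGroup.toGroup (theta_rels hUl hVl)

lemma theta_of (i : Fin D.n) : theta hUl hVl (PresentedGroup.of i) = thetaF i :=
  PresentedGroup.toGroup.of _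

/-- The factor maps `Gp1 → Gp` and `Gp2 → Gp`. -/
def k1F : Fin D.n → D.Gp := fun i => if (i : ℕ) < D.p then PresentedGroup.of i else 1

def k2F : Fin D.n → D.Gp := fun i => if (i : ℕ) < D.p then 1 else PresentedGroup.of i

lemma k1_rels : ∀ r ∈ D.rels1, FreeGroup.lift (k1F (D := D)) r = 1 := by
  rintro r (⟨i, hi, rfl⟩ | ⟨i, hi, rfl⟩)
  · rw [map_pow, FreeGroup.lift_apply_of, k1F, if_pos hi,
      show (PresentedGroup.of i : D.Gp) = PresentedGroup.mk D.rels (FreeGroup.of i) from rfl,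
      ← map_pow, pres_mk_rel (Or.inl ⟨i, rfl⟩)]
  · rw [FreeGroup.lift_apply_of, k1F, if_neg (by omega)]

lemma k2_rels : ∀ r ∈ D.rels2, FreeGroup.lift (k2F (D := D)) r = 1 := by
  rintro r (⟨i, hi, rfl⟩ | ⟨i, hi, rfl⟩)
  · rw [map_pow, FreeGroup.lift_apply_of, k2F, if_neg (by omega),
      show (PresentedGroup.of i : D.Gp) = PresentedGroup.mk D.rels (FreeGroup.of i) from rfl,
      ← map_pow, pres_mk_rel (Or.inl ⟨i, rfl⟩)]
  · rw [FreeGroup.lift_apply_of, k2F, if_pos hi]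

def k1 : D.Gp1 →* D.Gp := PresentedGroup.toGroup k1_rels

def k2 : D.Gp2 →* D.Gp := PresentedGroup.toGroup k2_rels

include hUl in
lemma k1_imgU1 : k1 D.imgU1 = PresentedGroup.mk D.rels D.U :=
  hom_eq_of_letters (g := k1.comp (PresentedGroup.mk D.rels1))
    (h := PresentedGroup.mk D.rels) (S := fun i => (i : ℕ) < D.p)
    (fun i hi => by
      show k1 (PresentedGroup.of i) = _
      rw [show k1 (PresentedGroup.of i) = k1F i from PresentedGroup.toGroup.of _, k1F, if_pos hi]
      rfl) hUl

include hVl in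
lemma k2_imgV2 : k2 D.imgV2 = PresentedGroup.mk D.rels D.V :=
  hom_eq_of_letters (g := k2.comp (PresentedGroup.mk D.rels2))
    (h := PresentedGroup.mk D.rels) (S := fun i => D.p ≤ (i : ℕ))
    (fun i hi => by
      show k2 (PresentedGroup.of i) = _
      rw [show k2 (PresentedGroup.of i) = k2F i from PresentedGroup.toGroup.of _, k2F,
        if_neg (by omega)]
      rfl) hVl

lemma mkU_mkV : PresentedGroup.mk D.rels D.U * PresentedGroup.mk D.rels D.V = 1 := by
  rw [← map_mul]
  exact pres_mk_rel (Or.inr rfl)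

def kk : ∀ b, Fac D b →* D.Gp := fun b =>
  match b with
  | true => k1
  | false => k2

include hUl hVl in
lemma kk_comp : ∀ b, (kk (D := D) b).comp (phi D b)
    = zpowersHom D.Gp (PresentedGroup.mk D.rels D.U) := by
  intro b
  cases b
  · apply MonoidHom.ext_mint
    show k2 (phi D false (Multiplicative.ofAdd 1)) = _
    have h1 : phi D false (Multiplicative.ofAdd 1) = D.imgV2⁻¹ := by
      exact zph D.imgV2⁻¹
    rw [h1, map_inv, k2_imgV2 hVl]
    have h2 := mkU_mkV (D := D)
    rw [zpowersHom_apply]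
    simp only [toAdd_ofAdd, zpow_one]
    rw [eq_comm, eq_inv_iff_mul_eq_one]
    exact h2
  · apply MonoidHom.ext_mint
    show k1 (phi D true (Multiplicative.ofAdd 1)) = _
    have h1 : phi D true (Multiplicative.ofAdd 1) = D.imgU1 := by
      exact zph D.imgU1
    rw [h1, k1_imgU1 hUl, zpowersHom_apply]
    simp

/-- The canonical map `P → Gp`. -/
def psi : P D →* D.Gp :=
  PushoutI.lift (kk (D := D)) (zpowersHom D.Gp (PresentedGroup.mk D.rels D.U)) (kk_comp hUl hVl)

lemma theta_psi (z : P D) : theta hUl hVl (psi hUl hVl z) = z := by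
  have : ((theta hUl hVl).comp (psi hUl hVl)) = MonoidHom.id (P D) := by
    apply PushoutI.hom_ext_nonempty
    intro b
    cases b
    · apply PresentedGroup.ext
      intro j
      show theta hUl hVl (psi hUl hVl (of2 D (PresentedGroup.of j))) = of2 D (PresentedGroup.of j)
      rw [show psi hUl hVl (of2 D (PresentedGroup.of j)) = k2 (PresentedGroup.of j) from
        PushoutI.lift_of _ _ _ _]
      rw [show (k2 (PresentedGroup.of j) : D.Gp) = k2F j from PresentedGroup.toGroup.of _, k2F]
      by_cases hj : (j : ℕ) < D.p
      · rw [if_pos hj, map_one]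
        rw [show (PresentedGroup.of j : D.Gp2) = 1 from pres_mk_rel (Or.inr ⟨j, hj, rfl⟩), map_one]
      · rw [if_neg hj, theta_of, thetaF, if_neg hj]
    · apply PresentedGroup.ext
      intro j
      show theta hUl hVl (psi hUl hVl (of1 D (PresentedGroup.of j))) = of1 D (PresentedGroup.of j)
      rw [show psi hUl hVl (of1 D (PresentedGroup.of j)) = k1 (PresentedGroup.of j) from
        PushoutI.lift_of _ _ _ _]
      rw [show (k1 (PresentedGroup.of j) : D.Gp) = k1F j from PresentedGroup.toGroup.of _, k1F]
      by_cases hj : (j : ℕ) < D.p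
      · rw [if_pos hj, theta_of, thetaF, if_pos hj]
      · rw [if_neg hj, map_one]
        rw [show (PresentedGroup.of j : D.Gp1) = 1 from
          pres_mk_rel (Or.inr ⟨j, by omega, rfl⟩), map_one]
  exact DFunLike.congr_fun this z

lemma noncomm (hinj : ∀ b, Function.Injective (phi D b)) {u : D.Gp1} {v : D.Gp2}
    (hu : u ∉ (phi D true).range) (hv : v ∉ (phi D false).range) :
    of1 D u * of2 D v ≠ of2 D v * of1 D u := by
  intro hcomm
  have hu1 : u ≠ 1 := fun h => hu (h ▸ one_mem _)
  have hv1 : v ≠ 1 := fun h => hv (h ▸ one_mem _)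
  let w : Monoid.CoprodI.Word (Fac D) :=
    ⟨[⟨true, u⟩, ⟨false, v⟩, ⟨true, u⁻¹⟩, ⟨false, v⁻¹⟩],
      by
        intro l hl
        simp only [List.mem_cons, List.mem_singleton, List.not_mem_nil, or_false] at hl
        rcases hl with rfl | rfl | rfl | rfl
        · exact hu1
        · exact hv1
        · exact inv_ne_one.2 hu1
        · exact inv_ne_one.2 hv1,
      by
        simp [List.isChain_cons_cons]⟩
  have hred : PushoutI.Reduced (phi D) w := by
    intro g hg
    simp only [w, List.mem_cons, List.mem_singleton, List.not_mem_nil, or_false] at hg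
    rcases hg with rfl | rfl | rfl | rfl
    · exact hu
    · exact hv
    · exact fun h => hu ((inv_mem_iff (x := u)).1 h)
    · exact fun h => hv ((inv_mem_iff (x := v)).1 h)
  have hprod : PushoutI.ofCoprodI (w.prod) = (1 : P D) := by
    have : w.prod = Monoid.CoprodI.of (M := Fac D) (i := true) u
        * Monoid.CoprodI.of (M := Fac D) (i := false) v
        * Monoid.CoprodI.of (M := Fac D) (i := true) u⁻¹
        * Monoid.CoprodI.of (M := Fac D) (i := false) v⁻¹ := by
      simp [Monoid.CoprodI.Word.prod, w, mul_assoc]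
    rw [this]
    simp only [map_mul, PushoutI.ofCoprodI_of, map_inv]
    show of1 D u * of2 D v * (of1 D u)⁻¹ * (of2 D v)⁻¹ = 1
    rw [hcomm]
    group
  have hempty := hred.eq_empty_of_mem_range hinj (by rw [hprod]; exact one_mem _)
  have hlist : w.toList = [] := by rw [hempty]; rfl
  simp [w] at hlist

end FPaperAux2

namespace FPaper

/-- If, in a group of F-type, both `U` (in `G₁`) and `V` (in `G₂`) are proper
powers, then the group admits no faithful representation into `PSL(2, ℂ)`. -/
theorem fType_no_faithful_psl2C_rep (D : FTypeBase) (hD : D.IsFType)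
    (hU : ∃ (U₁ : D.Gp1) (α : ℕ), 2 ≤ α ∧ D.imgU1 = U₁ ^ α)
    (hV : ∃ (V₁ : D.Gp2) (β : ℕ), 2 ≤ β ∧ D.imgV2 = V₁ ^ β) :
    ¬ ∃ ρ : D.Gp →* PSL(2, ℂ), Function.Injective ρ := by
  classical
  obtain ⟨-, -, -, -, hUl, hVl, -, -, hfinU, hfinV, -, -⟩ := hD
  obtain ⟨U₁, α, hα, hUeq⟩ := hU
  obtain ⟨V₁, β, hβ, hVeq⟩ := hV
  rintro ⟨ρ, hρ⟩
  open FPaperAux FPaperAux2 Monoid in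
  -- infinite-order facts
  have hU1fin : ¬ IsOfFinOrder U₁ := fun h => hfinU (hUeq ▸ h.pow)
  have hV1fin : ¬ IsOfFinOrder V₁ := fun h => hfinV (hVeq ▸ h.pow)
  have hVinvfin : ¬ IsOfFinOrder D.imgV2⁻¹ := by
    rw [isOfFinOrder_inv_iff]; exact hfinV
  have hzU : Function.Injective fun z : ℤ => U₁ ^ z :=
    injective_zpow_iff_not_isOfFinOrder.2 hU1fin
  have hzV : Function.Injective fun z : ℤ => V₁ ^ z :=
    injective_zpow_iff_not_isOfFinOrder.2 hV1fin
  have hinj : ∀ b, Function.Injective (FPaperAux2.phi D b) := by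
    intro b
    cases b
    · have h : Function.Injective fun z : ℤ => D.imgV2⁻¹ ^ z :=
        injective_zpow_iff_not_isOfFinOrder.2 hVinvfin
      intro a b hab
      exact Multiplicative.toAdd.injective (h hab)
    · have h : Function.Injective fun z : ℤ => D.imgU1 ^ z :=
        injective_zpow_iff_not_isOfFinOrder.2 hfinU
      intro a b hab
      exact Multiplicative.toAdd.injective (h hab)
  have hu : U₁ ∉ (FPaperAux2.phi D true).range := by
    rintro ⟨z, hz⟩
    have hz' : D.imgU1 ^ z.toAdd = U₁ := hz
    rw [hUeq, ← zpow_natCast, ← zpow_mul] at hz'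
    have h1 : (α : ℤ) * z.toAdd = 1 := hzU (by simpa using hz')
    have h2 : (α : ℤ) ≤ 1 := Int.le_of_dvd one_pos ⟨z.toAdd, h1.symm⟩
    omega
  have hv : V₁ ∉ (FPaperAux2.phi D false).range := by
    rintro ⟨z, hz⟩
    have hz' : (D.imgV2⁻¹) ^ z.toAdd = V₁ := hz
    rw [hVeq, ← zpow_natCast, ← zpow_neg, ← zpow_mul] at hz'
    have h1 : -(β : ℤ) * z.toAdd = 1 := hzV (by simpa using hz')
    have h2 : (β : ℤ) ≤ 1 := Int.le_of_dvd one_pos ⟨-z.toAdd, by linarith [h1]⟩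
    omega
  -- elements of Gp
  set x := FPaperAux2.psi hUl hVl (FPaperAux2.of1 D U₁) with hxdef
  set y := FPaperAux2.psi hUl hVl (FPaperAux2.of2 D V₁) with hydef
  set c := FPaperAux2.psi hUl hVl (FPaperAux2.of1 D D.imgU1) with hcdef
  have hxc : x ^ α = c := by
    rw [hxdef, hcdef, ← map_pow, ← map_pow, ← hUeq]
  have hyc : y ^ β = c⁻¹ := by
    rw [hydef, hcdef, ← map_pow, ← map_pow, ← hVeq, FPaperAux2.of2_imgV2, map_inv]
  have hcx : Commute c x := by
    rw [← hxc]; exact (Commute.refl x).pow_left α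
  have hcy : Commute c y := by
    have : Commute c⁻¹ y := by rw [← hyc]; exact (Commute.refl y).pow_left β
    exact (Commute.inv_left_iff).1 this
  have hc2 : c ^ 2 ≠ 1 := by
    intro h
    have h2 := congrArg (FPaperAux2.theta hUl hVl) h
    rw [map_pow, map_one, hcdef, FPaperAux2.theta_psi, ← map_pow] at h2
    have h3 : D.imgU1 ^ 2 = 1 := by
      have := PushoutI.of_injective hinj true (a₁ := D.imgU1 ^ 2) (a₂ := 1)
      exact this (by rw [map_one]; exact h2)
    exact hfinU (isOfFinOrder_iff_pow_eq_one.2 ⟨2, by norm_num, h3⟩)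
  have hxy : x * y ≠ y * x := by
    intro h
    have h2 := congrArg (FPaperAux2.theta hUl hVl) h
    rw [map_mul, map_mul, hxdef, hydef, FPaperAux2.theta_psi, FPaperAux2.theta_psi] at h2
    exact FPaperAux2.noncomm hinj hu hv h2
  -- transfer to PSL(2, ℂ)
  have hCX : ρ c * ρ x = ρ x * ρ c := by
    have h := congrArg ρ hcx.eq
    rwa [map_mul, map_mul] at h
  have hCY : ρ c * ρ y = ρ y * ρ c := by
    have h := congrArg ρ hcy.eq
    rwa [map_mul, map_mul] at h
  have hXY : ρ x * ρ y ≠ ρ y * ρ x := by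
    intro h
    exact hxy (hρ (by rw [map_mul, map_mul, h]))
  have := FPaperAux.psl_squash hCX hCY hXY
  exact hc2 (hρ (by rw [map_pow, map_one, this]))

end FPaper
end

section
/- Let G be a group of F-type. Then for each i with e_i ≥ 2 the image of the generator a_i in G has order exactly e_i, and every element of finite order in G is conjugate to a power of the image of some generator a_i. -/
open scoped MatrixGroups

namespace FPaper
open Monoid Function Monoid.CoprodI Monoid.PushoutI Subgroup

variable {ι : Type*} {G : ι → Type*} [∀ i, Group (G i)] {H : Type*} [Group H] {φ : ∀ i, H →* G i}

/-- Product of a list of letters in the pushout. -/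
def pprod (φ : ∀ i, H →* G i) (L : List (Σ i, G i)) : PushoutI φ :=
  (L.map fun l => PushoutI.of (φ := φ) l.1 l.2).prod

@[simp] lemma pprod_nil : pprod φ [] = 1 := rfl

lemma pprod_cons (a : Σ i, G i) (L : List (Σ i, G i)) :
    pprod φ (a :: L) = PushoutI.of (φ := φ) a.1 a.2 * pprod φ L := by
  simp [pprod]

lemma pprod_append (L₁ L₂ : List (Σ i, G i)) :
    pprod φ (L₁ ++ L₂) = pprod φ L₁ * pprod φ L₂ := by
  simp [pprod]

lemma ofCoprodI_word_prod (w : Word G) :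
    ofCoprodI (φ := φ) w.prod = pprod φ w.toList := by
  rw [Word.prod, map_list_prod, pprod, List.map_map]
  rfl


open Monoid Function Monoid.CoprodI Monoid.PushoutI Subgroup

variable {ι : Type*} {G : ι → Type*} [∀ i, Group (G i)] {H : Type*} [Group H] {φ : ∀ i, H →* G i}

lemma exists_word_pow {w : Word G} (hred : Monoid.PushoutI.Reduced φ w)
    (hne : w.toList ≠ [])
    (hcyc : ∀ x ∈ w.toList.getLast?, ∀ y ∈ w.toList.head?, x.1 ≠ y.1) (m : ℕ) :
    ∃ v : Word G, Monoid.PushoutI.Reduced φ v ∧ v.prod = w.prod ^ (m + 1) ∧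
      v.toList.head? = w.toList.head? ∧ v.toList.getLast? = w.toList.getLast? := by
  induction m with
  | zero => exact ⟨w, hred, by rw [pow_one], rfl, rfl⟩
  | succ m ih =>
    obtain ⟨v, hvred, hvprod, hvhead, hvlast⟩ := ih
    have hvne : v.toList ≠ [] := by
      intro h
      rw [h] at hvhead
      exact hne (List.head?_eq_none_iff.1 hvhead.symm)
    refine ⟨⟨w.toList ++ v.toList, ?_, ?_⟩, ?_, ?_, ?_, ?_⟩
    · intro l hl
      rcases List.mem_append.1 hl with h | h
      · exact w.ne_one l h
      · exact v.ne_one l h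
    · refine List.isChain_append.2 ⟨w.chain_ne, v.chain_ne, ?_⟩
      intro x hx y hy
      rw [hvhead] at hy
      exact hcyc x hx y hy
    · intro g hg
      rcases List.mem_append.1 hg with h | h
      · exact hred g h
      · exact hvred g h
    · show (((w.toList ++ v.toList).map fun l => CoprodI.of l.snd)).prod = _
      rw [List.map_append, List.prod_append]
      show w.prod * v.prod = _
      rw [hvprod, ← pow_succ']
    · show (w.toList ++ v.toList).head? = _
      rw [List.head?_append]
      cases h : w.toList.head? with
      | none => exact absurd (List.head?_eq_none_iff.1 h) hne
      | some a => rfl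
    · show (w.toList ++ v.toList).getLast? = _
      rw [List.getLast?_append_of_ne_nil _ hvne, hvlast]

lemma not_isOfFinOrder_of_reduced (hφ : ∀ i, Function.Injective (φ i)) {w : Word G}
    (hred : Monoid.PushoutI.Reduced φ w) (hne : w.toList ≠ [])
    (hcyc : ∀ x ∈ w.toList.getLast?, ∀ y ∈ w.toList.head?, x.1 ≠ y.1) :
    ¬ IsOfFinOrder (ofCoprodI (φ := φ) w.prod) := by
  intro hfin
  obtain ⟨n, hn, h1⟩ := isOfFinOrder_iff_pow_eq_one.1 hfin
  obtain ⟨m, rfl⟩ : ∃ m, n = m + 1 := ⟨n - 1, by omega⟩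
  obtain ⟨v, hvred, hvprod, hvhead, hvlast⟩ := exists_word_pow hred hne hcyc m
  have hmem : ofCoprodI (φ := φ) v.prod ∈ (PushoutI.base φ).range := by
    rw [hvprod, map_pow, h1]
    exact ⟨1, map_one _⟩
  have := hvred.eq_empty_of_mem_range hφ hmem
  rw [this] at hvhead
  exact hne (List.head?_eq_none_iff.1 hvhead.symm)


open Monoid Function Monoid.CoprodI Monoid.PushoutI Subgroup

lemma isOfFinOrder_conj {K : Type*} [Group K] {g : K} (hg : IsOfFinOrder g) (c : K) :
    IsOfFinOrder (c * g * c⁻¹) := by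
  obtain ⟨n, hn, h1⟩ := isOfFinOrder_iff_pow_eq_one.1 hg
  exact isOfFinOrder_iff_pow_eq_one.2
    ⟨n, hn, by rw [conj_pow, h1, mul_one, mul_inv_cancel]⟩

variable {ι : Type*} {G : ι → Type*} [∀ i, Group (G i)] {H : Type*} [Group H] {φ : ∀ i, H →* G i}

lemma conj_of_torsion_aux (hφ : ∀ i, Function.Injective (φ i)) [Nonempty ι] :
    ∀ (l : ℕ) (h : H) (w : Word G), Monoid.PushoutI.Reduced φ w → w.toList.length = l →
    IsOfFinOrder (PushoutI.base φ h * ofCoprodI w.prod) →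
    ∃ (i : ι) (c : PushoutI φ) (x : G i),
      PushoutI.base φ h * ofCoprodI w.prod = c * PushoutI.of (φ := φ) i x * c⁻¹ := by
  intro l
  induction l using Nat.strong_induction_on with
  | _ l ih =>
  intro h w hred hlen hfin
  rcases hL : w.toList with _ | ⟨a, rest⟩
  · refine ⟨Classical.arbitrary ι, 1, φ _ h, ?_⟩
    rw [ofCoprodI_word_prod, hL, pprod_nil, of_apply_eq_base]
    simp
  rcases List.eq_nil_or_concat rest with rfl | ⟨mid, b, rfl⟩
  · refine ⟨a.1, 1, φ a.1 h * a.2, ?_⟩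
    rw [ofCoprodI_word_prod, hL, pprod_cons, pprod_nil, map_mul, of_apply_eq_base]
    simp
  rw [List.concat_eq_append] at hL
  obtain ⟨ia, xa⟩ := a
  obtain ⟨ib, xb⟩ := b
  have hprod : ofCoprodI (φ := φ) w.prod
      = PushoutI.of (φ := φ) ia xa * pprod φ mid * PushoutI.of (φ := φ) ib xb := by
    rw [ofCoprodI_word_prod, hL, pprod_cons, pprod_append, pprod_cons, pprod_nil]
    simp [mul_assoc]
  have hne1 : ∀ x ∈ (⟨ia, xa⟩ :: (mid ++ [⟨ib, xb⟩]) : List (Σ i, G i)), x.2 ≠ 1 :=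
    fun x hx => w.ne_one x (by rw [hL]; exact hx)
  have hchain : (⟨ia, xa⟩ :: (mid ++ [⟨ib, xb⟩]) : List (Σ i, G i)).Chain'
      (fun x y => x.1 ≠ y.1) := by rw [← hL]; exact w.chain_ne
  have hredL : ∀ x ∈ (⟨ia, xa⟩ :: (mid ++ [⟨ib, xb⟩]) : List (Σ i, G i)),
      x.2 ∉ (φ x.1).range := fun x hx => hred x (by rw [hL]; exact hx)
  have hlen' : mid.length + 2 = l := by
    rw [← hlen, hL]; simp
  obtain ⟨hhead, hcm⟩ := List.isChain_cons.1 hchain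
  obtain ⟨hcmid, -, hlastmid⟩ := List.isChain_append.1 hcm
  by_cases hab : ia = ib
  · subst hab
    -- first and last letters in the same factor: conjugate to shorten
    have hmidhead : ∀ y ∈ mid.head?, ia ≠ y.1 := by
      intro y hy
      apply hhead
      rw [List.head?_append, hy]; rfl
    have wmid_ne : ∀ x ∈ mid, x.2 ≠ (1 : G x.1) :=
      fun x hx => hne1 x (List.mem_cons_of_mem _ (List.mem_append_left _ hx))
    set wmid : Word G := ⟨mid, wmid_ne, hcmid⟩ with hwmid
    have hwmidred : Monoid.PushoutI.Reduced φ wmid :=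
      fun x hx => hredL x (List.mem_cons_of_mem _ (List.mem_append_left _ hx))
    set z := xb * φ ia h * xa with hz_def
    have hofz : PushoutI.of (φ := φ) ia z
        = PushoutI.of (φ := φ) ia xb * PushoutI.base φ h * PushoutI.of (φ := φ) ia xa := by
      rw [hz_def, map_mul, map_mul, of_apply_eq_base]
    have hgconj : PushoutI.of (φ := φ) ia xb * (PushoutI.base φ h * ofCoprodI w.prod) *
        (PushoutI.of (φ := φ) ia xb)⁻¹
        = PushoutI.of (φ := φ) ia z * pprod φ mid := by
      rw [hprod, hofz]; group
    have hmidprod : pprod φ mid = ofCoprodI (φ := φ) wmid.prod := by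
      rw [ofCoprodI_word_prod]
    by_cases hz : z ∈ (φ ia).range
    · obtain ⟨h₂, hh₂⟩ := hz
      have heq : PushoutI.of (φ := φ) ia xb * (PushoutI.base φ h * ofCoprodI w.prod) *
          (PushoutI.of (φ := φ) ia xb)⁻¹
          = PushoutI.base φ h₂ * ofCoprodI wmid.prod := by
        rw [hgconj, ← hh₂, of_apply_eq_base, hmidprod]
      have hfin2 : IsOfFinOrder (PushoutI.base φ h₂ * ofCoprodI (φ := φ) wmid.prod) := by
        rw [← heq]; exact isOfFinOrder_conj hfin _
      obtain ⟨i, c, x, hx⟩ := ih mid.length (by omega) h₂ wmid hwmidred rfl hfin2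
      refine ⟨i, (PushoutI.of (φ := φ) ia xb)⁻¹ * c, x, ?_⟩
      have hg' : PushoutI.base φ h * ofCoprodI w.prod
          = (PushoutI.of (φ := φ) ia xb)⁻¹ *
            (PushoutI.base φ h₂ * ofCoprodI wmid.prod) * (PushoutI.of (φ := φ) ia xb) := by
        rw [← heq]; group
      rw [hg', hx]; group
    · have hzne : z ≠ 1 := fun h1 => hz (h1 ▸ ⟨1, map_one _⟩)
      set w2 : Word G := ⟨⟨ia, z⟩ :: mid,
        by
          intro x hx
          rcases List.mem_cons.1 hx with rfl | hx
          · exact hzne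
          · exact wmid_ne x hx,
        List.isChain_cons.2 ⟨hmidhead, hcmid⟩⟩ with hw2
      have hw2red : Monoid.PushoutI.Reduced φ w2 := by
        intro x hx
        rcases List.mem_cons.1 hx with rfl | hx
        · exact hz
        · exact hwmidred x hx
      have heq : PushoutI.of (φ := φ) ia xb * (PushoutI.base φ h * ofCoprodI w.prod) *
          (PushoutI.of (φ := φ) ia xb)⁻¹
          = PushoutI.base φ 1 * ofCoprodI w2.prod := by
        rw [hgconj, ofCoprodI_word_prod]
        show _ = _ * pprod φ (⟨ia, z⟩ :: mid)
        rw [pprod_cons, map_one, one_mul]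
      have hfin2 : IsOfFinOrder (PushoutI.base φ (1 : H) * ofCoprodI (φ := φ) w2.prod) := by
        rw [← heq]; exact isOfFinOrder_conj hfin _
      obtain ⟨i, c, x, hx⟩ := ih (mid.length + 1) (by omega) 1 w2 hw2red rfl hfin2
      refine ⟨i, (PushoutI.of (φ := φ) ia xb)⁻¹ * c, x, ?_⟩
      have hg' : PushoutI.base φ h * ofCoprodI w.prod
          = (PushoutI.of (φ := φ) ia xb)⁻¹ *
            (PushoutI.base φ 1 * ofCoprodI w2.prod) * (PushoutI.of (φ := φ) ia xb) := by
        rw [← heq]; group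
      rw [hg', hx]; group
  · -- first and last letters in different factors: infinite order, contradiction
    exfalso
    set z := φ ia h * xa with hz_def
    have hz : z ∉ (φ ia).range := by
      intro ⟨u, hu⟩
      apply hredL ⟨ia, xa⟩ List.mem_cons_self
      exact ⟨h⁻¹ * u, by rw [map_mul, map_inv, hu, hz_def]; group⟩
    have hzne : z ≠ 1 := fun h1 => hz (h1 ▸ ⟨1, map_one _⟩)
    set w' : Word G := ⟨⟨ia, z⟩ :: (mid ++ [⟨ib, xb⟩]),
      by
        intro x hx
        rcases List.mem_cons.1 hx with rfl | hx
        · exact hzne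
        · exact hne1 x (List.mem_cons_of_mem _ hx),
      List.isChain_cons.2 ⟨hhead, hcm⟩⟩ with hw'
    have hw'red : Monoid.PushoutI.Reduced φ w' := by
      intro x hx
      rcases List.mem_cons.1 hx with rfl | hx
      · exact hz
      · exact hredL x (List.mem_cons_of_mem _ hx)
    have heq : PushoutI.base φ h * ofCoprodI w.prod = ofCoprodI (φ := φ) w'.prod := by
      rw [hprod, ofCoprodI_word_prod]
      show _ = pprod φ (⟨ia, z⟩ :: (mid ++ [⟨ib, xb⟩]))
      rw [pprod_cons, pprod_append, pprod_cons, pprod_nil]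
      have : PushoutI.of (φ := φ) ia z = PushoutI.base φ h * PushoutI.of (φ := φ) ia xa := by
        rw [hz_def, map_mul, of_apply_eq_base]
      rw [this]; group
    refine not_isOfFinOrder_of_reduced hφ hw'red (by simp) ?_ (heq ▸ hfin)
    · intro x hx y hy
      have hx' : x = ⟨ib, xb⟩ := by
        have : (⟨ia, z⟩ :: (mid ++ [⟨ib, xb⟩]) : List (Σ i, G i)).getLast?
            = some ⟨ib, xb⟩ := by
          rw [← List.cons_append, List.getLast?_concat]
        rw [hw'] at hx
        simp only [this, Option.mem_def, Option.some.injEq] at hx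
        exact hx.symm
      have hy' : y = ⟨ia, z⟩ := by
        rw [hw'] at hy
        simp only [List.head?_cons, Option.mem_def, Option.some.injEq] at hy
        exact hy.symm
      rw [hx', hy']
      exact fun hh => hab hh.symm


open Monoid Function Monoid.CoprodI Monoid.PushoutI Subgroup

variable {ι : Type*} {G : ι → Type*} [∀ i, Group (G i)] {H : Type*} [Group H] {φ : ∀ i, H →* G i}

lemma eq_one_of_mem_set_of_mem_range {d : Monoid.PushoutI.NormalWord.Transversal φ} {i : ι}
    {x : G i} (hset : x ∈ d.set i) (hrng : x ∈ ((φ i).range : Subgroup (G i))) : x = 1 := by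
  have h := (d.compl i).existsUnique x
  obtain ⟨y, hy, hyu⟩ := h
  have h1 := hyu (⟨⟨x, hrng⟩, ⟨1, d.one_mem i⟩⟩ : ((φ i).range : Set (G i)) × (d.set i))
    (by simp)
  have h2 := hyu (⟨⟨1, one_mem _⟩, ⟨x, hset⟩⟩ : ((φ i).range : Set (G i)) × (d.set i))
    (by simp)
  have := h1.trans h2.symm
  have := congrArg (fun p => (p.2 : G i)) this
  simpa using this.symm

theorem conj_of_torsion (hφ : ∀ i, Function.Injective (φ i)) [Nonempty ι]
    (g : PushoutI φ) (hg : IsOfFinOrder g) :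
    ∃ (i : ι) (c : PushoutI φ) (x : G i),
      g = c * PushoutI.of (φ := φ) i x * c⁻¹ := by
  classical
  obtain ⟨d⟩ := Monoid.PushoutI.NormalWord.transversal_nonempty φ hφ
  set W : Monoid.PushoutI.NormalWord d := Monoid.PushoutI.NormalWord.equiv g with hW
  have hWg : W.prod = g := Monoid.PushoutI.NormalWord.equiv.symm_apply_apply g
  have hred : Monoid.PushoutI.Reduced φ W.toWord := by
    intro x hx
    intro hrng
    have h1 : x.2 ≠ 1 := W.ne_one x hx
    exact h1 (eq_one_of_mem_set_of_mem_range (W.normalized x.1 x.2 hx) hrng)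
  have hdecomp : g = PushoutI.base φ W.head * ofCoprodI W.toWord.prod := by
    rw [← hWg]; rfl
  rw [hdecomp] at hg ⊢
  exact conj_of_torsion_aux hφ W.toWord.toList.length W.head W.toWord hred rfl hg

end FPaper
namespace FPaper
open Monoid Function Monoid.CoprodI Monoid.PushoutI Subgroup

/-- Hom out of `Multiplicative (ZMod m)` determined by a torsion element. -/
noncomputable def zmodCycHom {K : Type*} [Group K] (m : ℕ) (g : K) (hg : g ^ m = 1) :
    Multiplicative (ZMod m) →* K :=
  AddMonoidHom.toMultiplicativeLeft
    (ZMod.lift m ⟨zmultiplesHom (Additive K) (Additive.ofMul g),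
      by rw [zmultiplesHom_apply, natCast_zsmul, ← ofMul_pow, hg]; rfl⟩)

@[simp] lemma zmodCycHom_ofAdd_one {K : Type*} [Group K] (m : ℕ) (g : K) (hg : g ^ m = 1) :
    zmodCycHom m g hg (Multiplicative.ofAdd (1 : ZMod m)) = g := by
  have h1 : ((1 : ℤ) : ZMod m) = (1 : ZMod m) := by push_cast; ring
  simp only [zmodCycHom, AddMonoidHom.coe_toMultiplicativeLeft, Function.comp_apply]
  rw [show (Multiplicative.toAdd (Multiplicative.ofAdd (1 : ZMod m))) = ((1 : ℤ) : ZMod m)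
    from h1.symm, ZMod.lift_coe]
  simp [zmultiplesHom_apply]

lemma exists_zpow_eq_zmod {m : ℕ} (x : Multiplicative (ZMod m)) :
    ∃ k : ℤ, x = (Multiplicative.ofAdd (1 : ZMod m)) ^ k := by
  refine ⟨(ZMod.cast x.toAdd : ℤ), ?_⟩
  rw [← ofAdd_zsmul, zsmul_one, ZMod.intCast_zmod_cast]
  rfl

lemma zmod_hom_ext {m : ℕ} {K : Type*} [Group K] {f g : Multiplicative (ZMod m) →* K}
    (h : f (Multiplicative.ofAdd (1 : ZMod m)) = g (Multiplicative.ofAdd (1 : ZMod m))) :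
    f = g := by
  refine MonoidHom.ext fun x => ?_
  obtain ⟨k, rfl⟩ := exists_zpow_eq_zmod x
  rw [map_zpow, map_zpow, h]

end FPaper


namespace FPaper
open Monoid Function Monoid.CoprodI Monoid.PushoutI Subgroup

lemma ofAdd_one_pow_self (m : ℕ) : (Multiplicative.ofAdd (1 : ZMod m)) ^ m = 1 := by
  rw [← ofAdd_nsmul, nsmul_eq_mul, mul_one, ZMod.natCast_self]
  rfl

lemma mk_rel_eq_one' {α : Type*} {rels : Set (FreeGroup α)} {r : FreeGroup α} (hr : r ∈ rels) :
    PresentedGroup.mk rels r = 1 :=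
  (QuotientGroup.eq_one_iff r).2 (Subgroup.subset_normalClosure hr)

section Cyclics

variable {α : Type*} (rels : Set (FreeGroup α)) (c : α → ℕ)

/-- The pushout (over the trivial group) of the cyclic groups `ZMod (c i)`:
a free product of cyclic groups. -/
abbrev CPush := Monoid.PushoutI (fun i : α => (1 : PUnit.{1} →* Multiplicative (ZMod (c i))))

lemma cpush_inj : ∀ i : α, Function.Injective
    ((1 : PUnit.{1} →* Multiplicative (ZMod (c i)))) :=
  fun _ a b _ => Subsingleton.elim a b

variable (hrels : ∀ r ∈ rels, ∃ i, r = FreeGroup.of i ^ c i)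
variable (hpow : ∀ i, FreeGroup.of i ^ c i ∈ rels)

/-- The map from the presented group to the free product of cyclics. -/
noncomputable def toC : PresentedGroup rels →* CPush c :=
  PresentedGroup.toGroup (f := fun i => PushoutI.of i (Multiplicative.ofAdd (1 : ZMod (c i))))
    (by
      intro r hr
      obtain ⟨i, rfl⟩ := hrels r hr
      rw [map_pow, FreeGroup.lift_apply_of, ← map_pow, ofAdd_one_pow_self, map_one])

@[simp] lemma toC_of (i : α) :
    toC rels c hrels (PresentedGroup.of i)
      = PushoutI.of i (Multiplicative.ofAdd (1 : ZMod (c i))) :=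
  PresentedGroup.toGroup.of _

/-- The map from the free product of cyclics back to the presented group. -/
noncomputable def fromC : CPush c →* PresentedGroup rels :=
  PushoutI.lift
    (fun i => zmodCycHom (c i) (PresentedGroup.of i)
      (by
        show PresentedGroup.mk rels (FreeGroup.of i) ^ c i = 1
        rw [← map_pow]
        exact mk_rel_eq_one' (hpow i)))
    1
    (by intro i; ext x; simp)

@[simp] lemma fromC_of (i : α) (x : Multiplicative (ZMod (c i))) :
    fromC rels c hpow (PushoutI.of i x)
      = zmodCycHom (c i) (PresentedGroup.of i) (by
        show PresentedGroup.mk rels (FreeGroup.of i) ^ c i = 1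
        rw [← map_pow]; exact mk_rel_eq_one' (hpow i)) x :=
  PushoutI.lift_of _ _ _ _

lemma fromC_toC (x : PresentedGroup rels) :
    fromC rels c hpow (toC rels c hrels x) = x := by
  have hcomp : (fromC rels c hpow).comp (toC rels c hrels) = MonoidHom.id _ := by
    refine PresentedGroup.ext fun i => ?_
    simp
  exact DFunLike.congr_fun hcomp x

lemma toC_fromC [Nonempty α] (x : CPush c) :
    toC rels c hrels (fromC rels c hpow x) = x := by
  have hcomp : (toC rels c hrels).comp (fromC rels c hpow) = MonoidHom.id _ := by
    refine PushoutI.hom_ext_nonempty fun i => ?_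
    refine zmod_hom_ext ?_
    simp
  exact DFunLike.congr_fun hcomp x

include hrels hpow in
lemma orderOf_presented_of [Nonempty α] (i : α) :
    orderOf (PresentedGroup.of i : PresentedGroup rels) = c i := by
  have hinj : Function.Injective (toC rels c hrels) :=
    Function.LeftInverse.injective (fromC_toC rels c hrels hpow)
  rw [← orderOf_injective _ hinj, toC_of,
    orderOf_injective _ (Monoid.PushoutI.of_injective (cpush_inj c) i),
    orderOf_ofAdd_eq_addOrderOf, ZMod.addOrderOf_one]

include hrels hpow in
lemma torsion_conj_presented [Nonempty α] {g : PresentedGroup rels} (hg : IsOfFinOrder g) :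
    ∃ (i : α) (k : ℤ) (h : PresentedGroup rels),
      g = h * (PresentedGroup.of i : PresentedGroup rels) ^ k * h⁻¹ := by
  have hinj : Function.Injective (toC rels c hrels) :=
    Function.LeftInverse.injective (fromC_toC rels c hrels hpow)
  have hfin : IsOfFinOrder (toC rels c hrels g) := MonoidHom.isOfFinOrder _ hg
  obtain ⟨i, ccc, y, hy⟩ := conj_of_torsion (cpush_inj c) _ hfin
  obtain ⟨k, rfl⟩ := exists_zpow_eq_zmod y
  refine ⟨i, k, fromC rels c hpow ccc, ?_⟩
  have := congrArg (fromC rels c hpow) hy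
  rw [fromC_toC rels c hrels hpow] at this
  rw [this, map_mul, map_mul, map_inv, map_zpow, map_zpow, fromC_of, zmodCycHom_ofAdd_one]

end Cyclics
end FPaper


namespace FPaper
open Function Subgroup

/-- Two group homs out of a free group agree on an element if they agree on all letters of its
reduced word. -/
lemma freeGroup_hom_eq_on_letters {α : Type*} [DecidableEq α] {K : Type*} [Group K]
    (f g : FreeGroup α →* K) (w : FreeGroup α)
    (h : ∀ x ∈ w.toWord, f (FreeGroup.of x.1) = g (FreeGroup.of x.1)) : f w = g w := by
  have main : ∀ L : List (α × Bool), (∀ x ∈ L, f (FreeGroup.of x.1) = g (FreeGroup.of x.1)) →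
      f (FreeGroup.mk L) = g (FreeGroup.mk L) := by
    intro L
    induction L with
    | nil => intro _; rw [← FreeGroup.one_eq_mk, map_one, map_one]
    | cons x t iht =>
      intro hx
      have hcons : FreeGroup.mk (x :: t) = FreeGroup.mk [x] * FreeGroup.mk t := by
        rw [FreeGroup.mul_mk]; rfl
      have hx1 : f (FreeGroup.mk [x]) = g (FreeGroup.mk [x]) := by
        rcases x with ⟨a, b⟩
        have ha := hx ⟨a, b⟩ List.mem_cons_self
        cases b
        · have : FreeGroup.mk [(a, false)] = (FreeGroup.of a)⁻¹ := by
            rw [show FreeGroup.of a = FreeGroup.mk [(a, true)] from rfl, FreeGroup.inv_mk]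
            rfl
          rw [this, map_inv, map_inv, ha]
        · exact ha
      rw [hcons, map_mul, map_mul, hx1, iht (fun y hy => hx y (List.mem_cons_of_mem _ hy))]
  conv_lhs => rw [← FreeGroup.mk_toWord (x := w)]
  conv_rhs => rw [← FreeGroup.mk_toWord (x := w)]
  exact main w.toWord h

lemma mk_rel_eq_one {α : Type*} {rels : Set (FreeGroup α)} {r : FreeGroup α} (hr : r ∈ rels) :
    PresentedGroup.mk rels r = 1 := by
  have : r ∈ Subgroup.normalClosure rels := Subgroup.subset_normalClosure hr
  exact (QuotientGroup.eq_one_iff r).2 this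

end FPaper

namespace FPaper
namespace FTypeBase
open Monoid Function Monoid.PushoutI Subgroup

variable (D : FTypeBase)

/-- Exponents for the presentation of the first factor. -/
def e1 (i : Fin D.n) : ℕ := if (i : ℕ) < D.p then D.e i else 1

/-- Exponents for the presentation of the second factor. -/
def e2 (i : Fin D.n) : ℕ := if D.p ≤ (i : ℕ) then D.e i else 1

lemma rels1_spec : ∀ r ∈ D.rels1, ∃ i, r = FreeGroup.of i ^ D.e1 i := by
  intro r hr
  simp only [rels1, Set.mem_union, Set.mem_setOf_eq] at hr
  rcases hr with ⟨i, hip, rfl⟩ | ⟨i, hpi, rfl⟩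
  · exact ⟨i, by rw [e1, if_pos hip]⟩
  · exact ⟨i, by rw [e1, if_neg (by omega), pow_one]⟩

lemma rels1_pow : ∀ i, FreeGroup.of i ^ D.e1 i ∈ D.rels1 := by
  intro i
  by_cases hip : (i : ℕ) < D.p
  · exact Set.mem_union_left _ ⟨i, hip, by rw [e1, if_pos hip]⟩
  · exact Set.mem_union_right _ ⟨i, by omega, by rw [e1, if_neg hip, pow_one]⟩

lemma rels2_spec : ∀ r ∈ D.rels2, ∃ i, r = FreeGroup.of i ^ D.e2 i := by
  intro r hr
  simp only [rels2, Set.mem_union, Set.mem_setOf_eq] at hr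
  rcases hr with ⟨i, hpi, rfl⟩ | ⟨i, hip, rfl⟩
  · exact ⟨i, by rw [e2, if_pos hpi]⟩
  · exact ⟨i, by rw [e2, if_neg (by omega), pow_one]⟩

lemma rels2_pow : ∀ i, FreeGroup.of i ^ D.e2 i ∈ D.rels2 := by
  intro i
  by_cases hpi : D.p ≤ (i : ℕ)
  · exact Set.mem_union_left _ ⟨i, hpi, by rw [e2, if_pos hpi]⟩
  · exact Set.mem_union_right _ ⟨i, by omega, by rw [e2, if_neg hpi, pow_one]⟩

/-- The two factors, as a `Bool`-indexed family. -/
def Gfam : Bool → Type _ := fun b => match b with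
  | true => D.Gp1
  | false => D.Gp2

instance (b : Bool) : Group (D.Gfam b) := match b with
  | true => inferInstanceAs (Group D.Gp1)
  | false => inferInstanceAs (Group D.Gp2)

/-- The amalgam maps `ℤ → G₁`, `n ↦ Uⁿ` and `ℤ → G₂`, `n ↦ V⁻ⁿ`. -/
def Phi : ∀ b, Multiplicative ℤ →* D.Gfam b := fun b => match b with
  | true => zpowersHom D.Gp1 D.imgU1
  | false => zpowersHom D.Gp2 (D.imgV2)⁻¹

lemma Phi_inj (hU : ¬ IsOfFinOrder D.imgU1) (hV : ¬ IsOfFinOrder D.imgV2) :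
    ∀ b, Function.Injective (D.Phi b) := by
  intro b
  cases b
  · have h2 : ¬ IsOfFinOrder (D.imgV2)⁻¹ := by rwa [isOfFinOrder_inv_iff]
    exact (injective_zpow_iff_not_isOfFinOrder.2 h2).comp Multiplicative.toAdd.injective
  · exact (injective_zpow_iff_not_isOfFinOrder.2 hU).comp Multiplicative.toAdd.injective

/-- The amalgamated free product `G₁ *_A G₂`. -/
abbrev PushG := Monoid.PushoutI D.Phi

lemma rels_pow_mem (i : Fin D.n) : FreeGroup.of i ^ D.e i ∈ D.rels :=
  Set.mem_union_left _ ⟨i, rfl⟩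

lemma rels_UV_mem : D.U * D.V ∈ D.rels :=
  Set.mem_union_right _ rfl

lemma mk_of_pow (i : Fin D.n) : (PresentedGroup.of i : D.Gp) ^ D.e i = 1 := by
  show PresentedGroup.mk D.rels (FreeGroup.of i) ^ D.e i = 1
  rw [← map_pow]
  exact mk_rel_eq_one' (D.rels_pow_mem i)

/-- The map `G₁ → G` killing the generators of the second factor. -/
noncomputable def j1 : D.Gp1 →* D.Gp :=
  PresentedGroup.toGroup
    (f := fun i : Fin D.n => if (i : ℕ) < D.p then (PresentedGroup.of i : D.Gp) else 1)
    (by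
      intro r hr
      simp only [rels1, Set.mem_union, Set.mem_setOf_eq] at hr
      rcases hr with ⟨i, hip, rfl⟩ | ⟨i, hpi, rfl⟩
      · rw [map_pow, FreeGroup.lift_apply_of, if_pos hip]
        exact D.mk_of_pow i
      · rw [FreeGroup.lift_apply_of, if_neg (by omega)])

@[simp] lemma j1_of (i : Fin D.n) :
    D.j1 (PresentedGroup.of i)
      = if (i : ℕ) < D.p then (PresentedGroup.of i : D.Gp) else 1 := by
  unfold j1
  exact PresentedGroup.toGroup.of _

/-- The map `G₂ → G` killing the generators of the first factor. -/
noncomputable def j2 : D.Gp2 →* D.Gp :=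
  PresentedGroup.toGroup
    (f := fun i : Fin D.n => if D.p ≤ (i : ℕ) then (PresentedGroup.of i : D.Gp) else 1)
    (by
      intro r hr
      simp only [rels2, Set.mem_union, Set.mem_setOf_eq] at hr
      rcases hr with ⟨i, hpi, rfl⟩ | ⟨i, hip, rfl⟩
      · rw [map_pow, FreeGroup.lift_apply_of, if_pos hpi]
        exact D.mk_of_pow i
      · rw [FreeGroup.lift_apply_of, if_neg (by omega)])

@[simp] lemma j2_of (i : Fin D.n) :
    D.j2 (PresentedGroup.of i)
      = if D.p ≤ (i : ℕ) then (PresentedGroup.of i : D.Gp) else 1 := by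
  unfold j2
  exact PresentedGroup.toGroup.of _

lemma j1_imgU (hUsupp : ∀ x ∈ D.U.toWord, (x.1 : ℕ) < D.p) :
    D.j1 D.imgU1 = PresentedGroup.mk D.rels D.U := by
  classical
  have := freeGroup_hom_eq_on_letters (D.j1.comp (PresentedGroup.mk D.rels1))
    (PresentedGroup.mk D.rels) D.U
    (fun x hx => by
      have hx' := hUsupp x hx
      show D.j1 (PresentedGroup.of x.1) = PresentedGroup.mk D.rels (FreeGroup.of x.1)
      rw [j1_of, if_pos hx']
      rfl)
  exact this

lemma j2_imgV (hVsupp : ∀ x ∈ D.V.toWord, D.p ≤ (x.1 : ℕ)) :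
    D.j2 D.imgV2 = PresentedGroup.mk D.rels D.V := by
  classical
  exact freeGroup_hom_eq_on_letters (D.j2.comp (PresentedGroup.mk D.rels2))
    (PresentedGroup.mk D.rels) D.V
    (fun x hx => by
      have hx' := hVsupp x hx
      show D.j2 (PresentedGroup.of x.1) = PresentedGroup.mk D.rels (FreeGroup.of x.1)
      rw [j2_of, if_pos hx']
      rfl)

lemma mkU_mul_mkV : PresentedGroup.mk D.rels D.U * PresentedGroup.mk D.rels D.V = 1 := by
  rw [← map_mul]
  exact mk_rel_eq_one' D.rels_UV_mem

/-- The map from the amalgamated product back to the F-type group. -/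
noncomputable def jmap (hUsupp : ∀ x ∈ D.U.toWord, (x.1 : ℕ) < D.p)
    (hVsupp : ∀ x ∈ D.V.toWord, D.p ≤ (x.1 : ℕ)) : D.PushG →* D.Gp :=
  PushoutI.lift
    (fun b => match b with
      | true => D.j1
      | false => D.j2)
    (zpowersHom D.Gp (PresentedGroup.mk D.rels D.U))
    (by
      intro b
      cases b
      · refine MonoidHom.ext_mint ?_
        show D.j2 ((D.imgV2⁻¹) ^ (Multiplicative.ofAdd (1:ℤ)).toAdd)
          = PresentedGroup.mk D.rels D.U ^ (Multiplicative.ofAdd (1:ℤ)).toAdd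
        rw [toAdd_ofAdd, zpow_one, zpow_one, map_inv, j2_imgV D hVsupp]
        exact (eq_inv_of_mul_eq_one_left D.mkU_mul_mkV).symm
      · refine MonoidHom.ext_mint ?_
        show D.j1 (D.imgU1 ^ (Multiplicative.ofAdd (1:ℤ)).toAdd)
          = PresentedGroup.mk D.rels D.U ^ (Multiplicative.ofAdd (1:ℤ)).toAdd
        rw [toAdd_ofAdd, zpow_one, zpow_one]
        exact j1_imgU D hUsupp)

end FTypeBase
end FPaper

namespace FPaper
namespace FTypeBase
open Monoid Function Monoid.PushoutI Subgroup

variable (D : FTypeBase)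

lemma gp1_of_pow (i : Fin D.n) (hip : (i : ℕ) < D.p) :
    (PresentedGroup.of i : D.Gp1) ^ D.e i = 1 := by
  show PresentedGroup.mk D.rels1 (FreeGroup.of i) ^ D.e i = 1
  rw [← map_pow]
  exact mk_rel_eq_one' (Set.mem_union_left _ ⟨i, hip, rfl⟩)

lemma gp2_of_pow (i : Fin D.n) (hpi : D.p ≤ (i : ℕ)) :
    (PresentedGroup.of i : D.Gp2) ^ D.e i = 1 := by
  show PresentedGroup.mk D.rels2 (FreeGroup.of i) ^ D.e i = 1
  rw [← map_pow]
  exact mk_rel_eq_one' (Set.mem_union_left _ ⟨i, hpi, rfl⟩)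

lemma gp1_of_eq_one (i : Fin D.n) (hpi : D.p ≤ (i : ℕ)) :
    (PresentedGroup.of i : D.Gp1) = 1 :=
  mk_rel_eq_one' (Set.mem_union_right _ ⟨i, hpi, rfl⟩)

lemma gp2_of_eq_one (i : Fin D.n) (hip : (i : ℕ) < D.p) :
    (PresentedGroup.of i : D.Gp2) = 1 :=
  mk_rel_eq_one' (Set.mem_union_right _ ⟨i, hip, rfl⟩)

lemma of_true_imgU1 :
    PushoutI.of (φ := D.Phi) true D.imgU1
      = PushoutI.base D.Phi (Multiplicative.ofAdd (1 : ℤ)) := by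
  rw [← of_apply_eq_base]
  congr 1
  show D.imgU1 = D.imgU1 ^ (Multiplicative.ofAdd (1 : ℤ)).toAdd
  simp

lemma of_false_imgV2 :
    PushoutI.of (φ := D.Phi) false D.imgV2
      = PushoutI.base D.Phi (Multiplicative.ofAdd (-1 : ℤ)) := by
  rw [← of_apply_eq_base]
  congr 1
  show D.imgV2 = (D.imgV2⁻¹) ^ (Multiplicative.ofAdd (-1 : ℤ)).toAdd
  simp

/-- The canonical map from the F-type group to the amalgamated product. -/
noncomputable def toPushG (hUsupp : ∀ x ∈ D.U.toWord, (x.1 : ℕ) < D.p)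
    (hVsupp : ∀ x ∈ D.V.toWord, D.p ≤ (x.1 : ℕ)) : D.Gp →* D.PushG :=
  PresentedGroup.toGroup
    (f := fun i : Fin D.n =>
      if (i : ℕ) < D.p then PushoutI.of (φ := D.Phi) true (PresentedGroup.of i : D.Gp1)
      else PushoutI.of (φ := D.Phi) false (PresentedGroup.of i : D.Gp2))
    (by
      classical
      intro r hr
      simp only [rels, Set.mem_union, Set.mem_setOf_eq, Set.mem_singleton_iff] at hr
      rcases hr with ⟨i, rfl⟩ | rfl
      · rw [map_pow, FreeGroup.lift_apply_of]
        by_cases hip : (i : ℕ) < D.p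
        · erw [if_pos hip, ← map_pow, D.gp1_of_pow i hip, map_one]
        · erw [if_neg hip, ← map_pow, D.gp2_of_pow i (by omega), map_one]
      · rw [map_mul]
        have hU' : (FreeGroup.lift fun i : Fin D.n =>
            if (i : ℕ) < D.p then PushoutI.of (φ := D.Phi) true (PresentedGroup.of i : D.Gp1)
            else PushoutI.of (φ := D.Phi) false (PresentedGroup.of i : D.Gp2)) D.U
            = PushoutI.of (φ := D.Phi) true D.imgU1 := by
          refine freeGroup_hom_eq_on_letters _
            ((PushoutI.of (φ := D.Phi) true).comp (PresentedGroup.mk D.rels1)) D.U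
            (fun x hx => ?_)
          rw [FreeGroup.lift_apply_of, if_pos (hUsupp x hx)]
          rfl
        have hV' : (FreeGroup.lift fun i : Fin D.n =>
            if (i : ℕ) < D.p then PushoutI.of (φ := D.Phi) true (PresentedGroup.of i : D.Gp1)
            else PushoutI.of (φ := D.Phi) false (PresentedGroup.of i : D.Gp2)) D.V
            = PushoutI.of (φ := D.Phi) false D.imgV2 := by
          refine freeGroup_hom_eq_on_letters _
            ((PushoutI.of (φ := D.Phi) false).comp (PresentedGroup.mk D.rels2)) D.V
            (fun x hx => ?_)
          rw [FreeGroup.lift_apply_of, if_neg (by have := hVsupp x hx; omega)]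
          rfl
        rw [hU', hV', D.of_true_imgU1, D.of_false_imgV2, ← map_mul]
        have : (Multiplicative.ofAdd (1 : ℤ)) * (Multiplicative.ofAdd (-1 : ℤ))
            = (1 : Multiplicative ℤ) := by
          rw [← ofAdd_add]
          norm_num
        rw [this, map_one])

lemma toPushG_of (hUsupp : ∀ x ∈ D.U.toWord, (x.1 : ℕ) < D.p)
    (hVsupp : ∀ x ∈ D.V.toWord, D.p ≤ (x.1 : ℕ)) (i : Fin D.n) :
    D.toPushG hUsupp hVsupp (PresentedGroup.of i)
      = if (i : ℕ) < D.p then PushoutI.of (φ := D.Phi) true (PresentedGroup.of i : D.Gp1)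
        else PushoutI.of (φ := D.Phi) false (PresentedGroup.of i : D.Gp2) := by
  unfold toPushG
  exact PresentedGroup.toGroup.of _

lemma jmap_of_true (hUsupp : ∀ x ∈ D.U.toWord, (x.1 : ℕ) < D.p)
    (hVsupp : ∀ x ∈ D.V.toWord, D.p ≤ (x.1 : ℕ)) (x : D.Gp1) :
    D.jmap hUsupp hVsupp (PushoutI.of (φ := D.Phi) true x) = D.j1 x := by
  unfold jmap
  exact PushoutI.lift_of _ _ _ _

lemma jmap_of_false (hUsupp : ∀ x ∈ D.U.toWord, (x.1 : ℕ) < D.p)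
    (hVsupp : ∀ x ∈ D.V.toWord, D.p ≤ (x.1 : ℕ)) (x : D.Gp2) :
    D.jmap hUsupp hVsupp (PushoutI.of (φ := D.Phi) false x) = D.j2 x := by
  unfold jmap
  exact PushoutI.lift_of _ _ _ _

lemma jmap_toPushG (hUsupp : ∀ x ∈ D.U.toWord, (x.1 : ℕ) < D.p)
    (hVsupp : ∀ x ∈ D.V.toWord, D.p ≤ (x.1 : ℕ)) (x : D.Gp) :
    D.jmap hUsupp hVsupp (D.toPushG hUsupp hVsupp x) = x := by
  have hcomp : (D.jmap hUsupp hVsupp).comp (D.toPushG hUsupp hVsupp) = MonoidHom.id _ := by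
    refine PresentedGroup.ext fun i => ?_
    show D.jmap hUsupp hVsupp (D.toPushG hUsupp hVsupp (PresentedGroup.of i))
      = PresentedGroup.of i
    rw [toPushG_of]
    by_cases hip : (i : ℕ) < D.p
    · rw [if_pos hip, jmap_of_true, j1_of, if_pos hip]
    · rw [if_neg hip, jmap_of_false, j2_of, if_pos (by omega)]
  exact DFunLike.congr_fun hcomp x

end FTypeBase
end FPaper



namespace FPaper

/-- In a group of F-type, the generator `a_i` has order exactly `e_i` whenever
`e_i ≥ 2`, and every element of finite order is conjugate to a power of some generator. -/
theorem fType_orders_and_torsion (D : FTypeBase) (hD : D.IsFType) :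
    (∀ i : Fin D.n, 2 ≤ D.e i → orderOf (PresentedGroup.of i : D.Gp) = D.e i) ∧
    (∀ g : D.Gp, IsOfFinOrder g →
      ∃ (i : Fin D.n) (k : ℤ) (h : D.Gp),
        g = h * (PresentedGroup.of i : D.Gp) ^ k * h⁻¹) := by
  classical
  obtain ⟨hn2, he, hp1, hpn, hUsupp, hVsupp, -, -, hU, hV, -, -⟩ := hD
  haveI : Nonempty (Fin D.n) := ⟨⟨0, by omega⟩⟩
  have hPhi : ∀ b, Function.Injective (D.Phi b) := D.Phi_inj hU hV
  have hjt : ∀ x, D.jmap hUsupp hVsupp (D.toPushG hUsupp hVsupp x) = x :=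
    D.jmap_toPushG hUsupp hVsupp
  have hinjT : Function.Injective (D.toPushG hUsupp hVsupp) :=
    Function.LeftInverse.injective hjt
  constructor
  · intro i hi
    by_cases hip : (i : ℕ) < D.p
    · calc orderOf (PresentedGroup.of i : D.Gp)
          = orderOf ((D.toPushG hUsupp hVsupp) (PresentedGroup.of i)) :=
            (orderOf_injective _ hinjT _).symm
        _ = orderOf (Monoid.PushoutI.of (φ := D.Phi) true (PresentedGroup.of i : D.Gp1)) := by
            rw [FTypeBase.toPushG_of, if_pos hip]
        _ = orderOf (PresentedGroup.of i : D.Gp1) :=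
            orderOf_injective _ (Monoid.PushoutI.of_injective hPhi true) _
        _ = D.e1 i := orderOf_presented_of D.rels1 D.e1 D.rels1_spec D.rels1_pow i
        _ = D.e i := by rw [FTypeBase.e1, if_pos hip]
    · calc orderOf (PresentedGroup.of i : D.Gp)
          = orderOf ((D.toPushG hUsupp hVsupp) (PresentedGroup.of i)) :=
            (orderOf_injective _ hinjT _).symm
        _ = orderOf (Monoid.PushoutI.of (φ := D.Phi) false (PresentedGroup.of i : D.Gp2)) := by
            rw [FTypeBase.toPushG_of, if_neg hip]
        _ = orderOf (PresentedGroup.of i : D.Gp2) :=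
            orderOf_injective _ (Monoid.PushoutI.of_injective hPhi false) _
        _ = D.e2 i := orderOf_presented_of D.rels2 D.e2 D.rels2_spec D.rels2_pow i
        _ = D.e i := by rw [FTypeBase.e2, if_pos (by omega)]
  · intro g hg
    have hgfin : IsOfFinOrder (D.toPushG hUsupp hVsupp g) := MonoidHom.isOfFinOrder _ hg
    obtain ⟨b, c, x, hx⟩ := conj_of_torsion hPhi _ hgfin
    have hgj : g = D.jmap hUsupp hVsupp (D.toPushG hUsupp hVsupp g) := (hjt g).symm
    rw [hx, map_mul, map_mul, map_inv] at hgj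
    have hofx : IsOfFinOrder (Monoid.PushoutI.of (φ := D.Phi) b x) := by
      have h' : Monoid.PushoutI.of (φ := D.Phi) b x
          = c⁻¹ * ((D.toPushG hUsupp hVsupp) g) * c⁻¹⁻¹ := by rw [hx]; group
      rw [h']
      exact isOfFinOrder_conj hgfin _
    have hxfin : IsOfFinOrder x := by
      rw [← orderOf_pos_iff] at hofx ⊢
      rwa [orderOf_injective _ (Monoid.PushoutI.of_injective hPhi b) x] at hofx
    cases b
    · -- b = false : x lies in the second factor Gp2
      obtain ⟨i, k, h1, hh1⟩ :=
        torsion_conj_presented D.rels2 D.e2 D.rels2_spec D.rels2_pow hxfin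
      erw [FTypeBase.jmap_of_false, hh1, map_mul, map_mul, map_inv, map_zpow,
        FTypeBase.j2_of] at hgj
      by_cases hpi : D.p ≤ (i : ℕ)
      · rw [if_pos hpi] at hgj
        exact ⟨i, k, D.jmap hUsupp hVsupp c * D.j2 h1, by rw [hgj]; group⟩
      · rw [if_neg hpi] at hgj
        refine ⟨i, 0, 1, ?_⟩
        rw [hgj]
        simp
    · -- b = true : x lies in the first factor Gp1
      obtain ⟨i, k, h1, hh1⟩ :=
        torsion_conj_presented D.rels1 D.e1 D.rels1_spec D.rels1_pow hxfin
      erw [FTypeBase.jmap_of_true, hh1, map_mul, map_mul, map_inv, map_zpow,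
        FTypeBase.j1_of] at hgj
      by_cases hip : (i : ℕ) < D.p
      · rw [if_pos hip] at hgj
        exact ⟨i, k, D.jmap hUsupp hVsupp c * D.j1 h1, by rw [hgj]; group⟩
      · rw [if_neg hip] at hgj
        refine ⟨i, 0, 1, ?_⟩
        rw [hgj]
        simp

end FPaper
end
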